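/- For every integer s ≥ 2, there exists a linear code over GF(4) of length 2s+2, dimension s, and minimum distance 4 that has locality 1; and for each k ∈ {2,3}, there exists a linear code over GF(4) of length 2k+6, dimension k, and minimum distance 8 that has locality 1. These are optimal (2s+2, s, 1) LRCs and optimal (2k+6, k, 1) LRCs, since (2s+2) − s − ⌈s/1⌉ + 2 = 4 and (2k+6) − k − ⌈k/1⌉ + 2 = 8. -/
import Mathlib


noncomputable def wt {F : Type*} [Zero F] {ι : Type*} (x : ι → F) : ℕ :=
  {i | x i ≠ 0}.ncard

def dualCode {F : Type*} [Field F] {n : ℕ} (C : Submodule F (Fin n → F)) :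
    Submodule F (Fin n → F) where
  carrier := {y | ∀ x ∈ C, ∑ i, x i * y i = 0}
  add_mem' := by
    intro a b ha hb
    simp only [Set.mem_setOf_eq] at *
    intro z hz
    simp [Pi.add_apply, mul_add, Finset.sum_add_distrib, ha z hz, hb z hz]
  zero_mem' := by
    intro z hz
    simp
  smul_mem' := by
    intro c a ha
    simp only [Set.mem_setOf_eq] at *
    intro z hz
    have h : ∀ i, z i * (c • a) i = c * (z i * a i) := by
      intro i; simp [smul_eq_mul]; ring
    simp only [h, ← Finset.mul_sum, ha z hz, mul_zero]

def isMinDist {F : Type*} [Field F] {ι : Type*} (C : Submodule F (ι → F)) (d : ℕ) : Prop :=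
  (∃ x ∈ C, x ≠ 0 ∧ wt x = d) ∧ ∀ x ∈ C, x ≠ 0 → d ≤ wt x

def hasLocality {F : Type*} [Field F] {n : ℕ} (C : Submodule F (Fin n → F)) (r : ℕ) : Prop :=
  ∀ i : Fin n, ∃ h ∈ dualCode C, h i ≠ 0 ∧ wt h ≤ r + 1

abbrev GF4 := GaloisField 2 2

def ceilDiv (a b : ℕ) : ℕ := (a + b - 1) / b

set_option linter.unusedSectionVars false

section wtlemmas
variable {F : Type*} [Zero F] {n : ℕ}
lemma wt_eq_coe (x : Fin n → F) (s : Finset (Fin n)) (h : {i | x i ≠ 0} = ↑s) :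
    wt x = s.card := by
  rw [wt, h, Set.ncard_coe_finset]
lemma wt_le_two (x : Fin n → F) (j1 j2 : Fin n) (h : ∀ j, j ≠ j1 → j ≠ j2 → x j = 0) :
    wt x ≤ 2 := by
  have hsub : {i | x i ≠ 0} ⊆ {j1, j2} := by
    intro j hj
    by_contra hc
    simp only [Set.mem_insert_iff, Set.mem_singleton_iff, not_or] at hc
    exact hj (h j hc.1 hc.2)
  calc wt x ≤ ({j1, j2} : Set (Fin n)).ncard := Set.ncard_le_ncard hsub (Set.toFinite _)
    _ ≤ 2 := by
        apply le_trans (Set.ncard_insert_le _ _)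
        simp
end wtlemmas

section dup
variable (F : Type*) [Field F] {m : ℕ}
def dupMap (m : ℕ) : (Fin m → F) →ₗ[F] (Fin (2 * m) → F) :=
  LinearMap.funLeft F F Fin.modNat
lemma modNat_e (p : Fin 2 × Fin m) : (finProdFinEquiv p).modNat = p.2 :=
  congrArg Prod.snd (finProdFinEquiv.symm_apply_apply p)
lemma e_divNat_modNat (j : Fin (2 * m)) : finProdFinEquiv (j.divNat, j.modNat) = j :=
  finProdFinEquiv.apply_symm_apply j
lemma dup_apply (x : Fin m → F) (j : Fin (2 * m)) : dupMap F m x j = x j.modNat := rfl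
lemma dup_inj : Function.Injective (dupMap F m) := by
  apply LinearMap.funLeft_injective_of_surjective
  intro b
  exact ⟨finProdFinEquiv (0, b), modNat_e _⟩
lemma wt_dup (y : Fin m → F) : wt (dupMap F m y) = 2 * wt y := by
  classical
  have h1 : wt (dupMap F m y) =
      (Finset.univ.filter fun j : Fin (2 * m) => y j.modNat ≠ 0).card := by
    rw [wt]
    rw [show {j : Fin (2*m) | dupMap F m y j ≠ 0}
        = ↑(Finset.univ.filter fun j : Fin (2 * m) => y j.modNat ≠ 0) by
      ext j; simp [dup_apply]]
    exact Set.ncard_coe_finset _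
  have h2 : wt y = (Finset.univ.filter fun b : Fin m => y b ≠ 0).card := by
    rw [wt]
    rw [show {b : Fin m | y b ≠ 0} = ↑(Finset.univ.filter fun b : Fin m => y b ≠ 0) by
      ext b; simp]
    exact Set.ncard_coe_finset _
  rw [h1, h2]
  have himg : (Finset.univ.filter fun j : Fin (2 * m) => y j.modNat ≠ 0)
      = Finset.image finProdFinEquiv
        ((Finset.univ : Finset (Fin 2)) ×ˢ (Finset.univ.filter fun b : Fin m => y b ≠ 0)) := by
    ext j
    constructor
    · intro hj
      refine Finset.mem_image.2 ⟨(j.divNat, j.modNat), Finset.mem_product.2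
        ⟨Finset.mem_univ _, Finset.mem_filter.2 ⟨Finset.mem_univ _, ?_⟩⟩, e_divNat_modNat j⟩
      simpa using (Finset.mem_filter.1 hj).2
    · intro hj
      obtain ⟨p, hp, rfl⟩ := Finset.mem_image.1 hj
      have := (Finset.mem_filter.1 (Finset.mem_product.1 hp).2).2
      refine Finset.mem_filter.2 ⟨Finset.mem_univ _, ?_⟩
      simpa [modNat_e] using this
  rw [himg, Finset.card_image_of_injective _ finProdFinEquiv.injective,
    Finset.card_product, Finset.card_univ, Fintype.card_fin]

theorem dup_exists {k d : ℕ} (B : Submodule F (Fin m → F))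
    (hk : Module.finrank F B = k) (hmin : isMinDist B d) :
    ∃ C : Submodule F (Fin (2 * m) → F),
      Module.finrank F C = k ∧ isMinDist C (2 * d) ∧ hasLocality C 1 := by
  refine ⟨B.map (dupMap F m), ?_, ⟨?_, ?_⟩, ?_⟩
  · rw [← hk]
    exact (Submodule.equivMapOfInjective _ (dup_inj F) B).finrank_eq.symm
  · obtain ⟨y, hyB, hyne, hywt⟩ := hmin.1
    refine ⟨dupMap F m y, Submodule.mem_map_of_mem hyB, ?_, by rw [wt_dup, hywt]⟩
    intro hc
    exact hyne (dup_inj F (by rw [hc, map_zero]))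
  · rintro x hx hxne
    obtain ⟨y, hyB, rfl⟩ := hx
    have hyne : y ≠ 0 := by
      rintro rfl; exact hxne (map_zero _)
    rw [wt_dup]
    exact Nat.mul_le_mul_left 2 (hmin.2 y hyB hyne)
  · intro i
    set bb := i.modNat with hbb
    set j1 := finProdFinEquiv ((0 : Fin 2), bb) with hj1
    set j2 := finProdFinEquiv ((1 : Fin 2), bb) with hj2
    have hj12 : j1 ≠ j2 := by
      intro hc
      have := finProdFinEquiv.injective hc
      simp at this
    refine ⟨fun j => (if j = j1 then (1:F) else 0) - (if j = j2 then 1 else 0), ?_, ?_, ?_⟩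
    · intro x hx
      obtain ⟨y, hyB, rfl⟩ := hx
      have : ∀ j : Fin (2*m), dupMap F m y j *
          ((if j = j1 then (1:F) else 0) - (if j = j2 then 1 else 0))
          = (if j = j1 then dupMap F m y j else 0) - (if j = j2 then dupMap F m y j else 0) := by
        intro j
        split <;> split <;> ring
      rw [Finset.sum_congr rfl fun j _ => this j, Finset.sum_sub_distrib,
        Finset.sum_ite_eq' _ j1, Finset.sum_ite_eq' _ j2]
      simp only [Finset.mem_univ, if_true]
      rw [dup_apply, dup_apply, hj1, hj2, modNat_e, modNat_e, sub_self]
    · have hior : i = j1 ∨ i = j2 := by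
        have h2 : ∀ a : Fin 2, a = 0 ∨ a = 1 := by decide
        have hi : finProdFinEquiv (i.divNat, i.modNat) = i := e_divNat_modNat i
        rcases h2 i.divNat with h | h
        · left; rw [← hi, h, hj1, hbb]
        · right; rw [← hi, h, hj2, hbb]
      rcases hior with h | h
      · simp [h, hj12]
      · simp [h, hj12.symm]
    · apply wt_le_two _ j1 j2
      intro j h1 h2
      simp [h1, h2]
end dup

section wtlemmas
variable {F : Type*} [Zero F] {n : ℕ}
noncomputable def Zset (x : Fin n → F) : Finset (Fin n) :=
  @Finset.filter _ (fun i => x i = 0) (Classical.decPred _) Finset.univ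
lemma mem_Zset {x : Fin n → F} {i : Fin n} : i ∈ Zset x ↔ x i = 0 := by
  simp [Zset]
lemma wt_ge_of_Zset (x : Fin n → F) (m : ℕ) (h : (Zset x).card ≤ m) :
    n - m ≤ wt x := by
  have hset : {i | x i ≠ 0} = ↑(Finset.univ \ Zset x) := by
    ext i; simp [mem_Zset]
  rw [wt_eq_coe x _ hset, Finset.card_sdiff_of_subset (Finset.subset_univ _), Finset.card_univ,
    Fintype.card_fin]
  omega
lemma Zset_card_le_one {x : Fin n → F} (h : ∀ p q, x p = 0 → x q = 0 → p = q) :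
    (Zset x).card ≤ 1 := by
  apply Finset.card_le_one.2
  intro a ha b hb
  exact h a b (mem_Zset.1 ha) (mem_Zset.1 hb)
lemma Zset_card_le_two {x : Fin n → F}
    (h : ∀ p q r, x p = 0 → x q = 0 → x r = 0 → p ≠ q → p ≠ r → q ≠ r → False) :
    (Zset x).card ≤ 2 := by
  by_contra hc
  push_neg at hc
  obtain ⟨t, ht, hcard⟩ := Finset.exists_subset_card_eq (show 3 ≤ (Zset x).card by omega)
  obtain ⟨a, b, c, hab, hac, hbc, rfl⟩ := Finset.card_eq_three.1 hcard
  have hz : ∀ y ∈ ({a, b, c} : Finset (Fin n)), x y = 0 := fun y hy => mem_Zset.1 (ht hy)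
  exact h a b c (hz a (by simp)) (hz b (by simp)) (hz c (by simp)) hab hac hbc
end wtlemmas

section roots
variable {F : Type*} [Field F] [CharP F 2]

lemma root_lin {b c t u : F} (hb : b ≠ 0) (ht : b * t + c = 0) (hu : b * u + c = 0) :
    t = u := by
  have h : b * t = b * u := by linear_combination ht - hu
  exact mul_left_cancel₀ hb h

lemma root_sq {a c t u : F} (ha : a ≠ 0) (ht : a * t * t + c = 0) (hu : a * u * u + c = 0) :
    t = u := by
  have h : (t - u) * (t + u) = 0 := by
    have h2 : a * (t * t - u * u) = 0 := by linear_combination ht - hu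
    rcases mul_eq_zero.1 h2 with h | h
    · exact absurd h ha
    · linear_combination h
  rcases mul_eq_zero.1 h with h | h
  · linear_combination h
  · have : t = -u := by linear_combination h
    rwa [CharTwo.neg_eq] at this

lemma two_roots {a b c t u : F} (htu : t ≠ u)
    (ht : a * t * t + b * t + c = 0) (hu : a * u * u + b * u + c = 0) :
    a * (t + u) + b = 0 := by
  have h : (t - u) * (a * (t + u) + b) = 0 := by linear_combination ht - hu
  rcases mul_eq_zero.1 h with h | h
  · exact absurd (by linear_combination h) htu
  · exact h
end roots

section evalcodes
variable {F : Type*} [Field F] [CharP F 2] (v : Fin 4 ↪ F)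

lemma fin5_cases (p : Fin 5) : (p : ℕ) < 4 ∨ p = 4 := by
  rcases Nat.lt_or_ge p.1 4 with h | h
  · exact Or.inl h
  · right
    have h5 := p.isLt
    exact Fin.ext (by omega)

lemma fin6_cases (p : Fin 6) : (p : ℕ) < 4 ∨ p = 4 ∨ p = 5 := by
  rcases Nat.lt_or_ge p.1 4 with h | h
  · exact Or.inl h
  · right
    have h6 := p.isLt
    have : p.1 = 4 ∨ p.1 = 5 := by omega
    rcases this with h | h
    · exact Or.inl (Fin.ext (by omega))
    · exact Or.inr (Fin.ext (by omega))

/-- coefficients of the [5,2,4] code -/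
def aB : Fin 5 → F := fun i => if h : (i : ℕ) < 4 then v ⟨i.1, h⟩ else 1
def bB : Fin 5 → F := fun i => if (i : ℕ) < 4 then 1 else 0

def GB : (Fin 2 → F) →ₗ[F] (Fin 5 → F) where
  toFun y := fun i => aB v i * y 0 + bB i * y 1
  map_add' y z := by funext i; simp only [Pi.add_apply]; ring
  map_smul' c y := by funext i; simp only [Pi.smul_apply, smul_eq_mul, RingHom.id_apply]; ring

lemma GB_apply (y : Fin 2 → F) (i : Fin 5) : GB v y i = aB v i * y 0 + bB i * y 1 := rfl

lemma GB_eval (y : Fin 2 → F) (i : Fin 5) (h : (i : ℕ) < 4) :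
    GB v y i = v ⟨i.1, h⟩ * y 0 + y 1 := by
  rw [GB_apply]
  simp [aB, bB, h]

lemma GB_four (y : Fin 2 → F) : GB v y 4 = y 0 := by
  rw [GB_apply]
  have h4 : ¬((4 : Fin 5) : ℕ) < 4 := by decide
  simp [aB, bB, h4]

lemma GB_inj : Function.Injective (GB v) := by
  have hz : ∀ y : Fin 2 → F, GB v y = 0 → y = 0 := by
    intro y h
    have h0 : y 0 = 0 := by
      have := congrFun h 4
      rwa [GB_four] at this
    have h1 : y 1 = 0 := by
      have := congrFun h 0
      rw [GB_eval v y 0 (by norm_num), h0] at this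
      simpa using this
    funext j
    fin_cases j
    · exact h0
    · exact h1
  intro y1 y2 h
  have := hz (y1 - y2) (by rw [map_sub, h, sub_self])
  rwa [sub_eq_zero] at this

lemma GB_rank : Module.finrank F (LinearMap.range (GB v)) = 2 := by
  rw [LinearMap.finrank_range_of_inj (GB_inj v), Module.finrank_fin_fun]

lemma GB_minDist : isMinDist (LinearMap.range (GB v)) 4 := by
  constructor
  · -- witness
    set y : Fin 2 → F := ![0, 1] with hy
    have hy0 : y 0 = 0 := rfl
    have hy1 : y 1 = 1 := rfl
    set x := GB v y with hx
    have hxi : ∀ i : Fin 5, x i = if (i : ℕ) < 4 then 1 else 0 := by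
      intro i
      rcases fin5_cases i with h | rfl
      · rw [hx, GB_eval v y i h, hy0, hy1, if_pos h]; ring
      · rw [hx, GB_four, hy0]
        have h4 : ¬((4 : Fin 5) : ℕ) < 4 := by decide
        simp [h4]
    refine ⟨x, LinearMap.mem_range_self _ _, ?_, ?_⟩
    · intro hc
      have := congrFun hc 0
      rw [hxi 0] at this
      norm_num at this
    · have hset : {i | x i ≠ 0} = ↑({0, 1, 2, 3} : Finset (Fin 5)) := by
        ext i
        simp only [Set.mem_setOf_eq, hxi i]
        constructor
        · intro hi
          have h4 : (i : ℕ) < 4 := by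
            by_contra hc
            simp [hc] at hi
          fin_cases i <;> simp_all <;> norm_num at h4
        · intro hi
          fin_cases i <;> simp_all
      rw [wt_eq_coe x _ hset]
      decide
  · rintro x ⟨y, rfl⟩ hxne
    have hy : ¬(y 0 = 0 ∧ y 1 = 0) := by
      rintro ⟨h0, h1⟩
      apply hxne
      have : y = 0 := by
        funext j; fin_cases j
        · exact h0
        · exact h1
      rw [this, map_zero]
    have hcard : (Zset (GB v y)).card ≤ 1 := by
      apply Zset_card_le_one
      intro p q hp hq
      by_cases hy0 : y 0 = 0
      · have hy1 : y 1 ≠ 0 := fun h => hy ⟨hy0, h⟩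
        have h4 : ∀ t : Fin 5, GB v y t = 0 → t = 4 := by
          intro t ht
          rcases fin5_cases t with h | h
          · rw [GB_eval v y t h, hy0] at ht
            simp at ht
            exact absurd ht hy1
          · exact h
        rw [h4 p hp, h4 q hq]
      · have hev : ∀ t : Fin 5, GB v y t = 0 → (t : ℕ) < 4 := by
          intro t ht
          rcases fin5_cases t with h | rfl
          · exact h
          · rw [GB_four] at ht
            exact absurd ht hy0
        have hp4 := hev p hp
        have hq4 := hev q hq
        rw [GB_eval v y p hp4] at hp
        rw [GB_eval v y q hq4] at hq
        have hvv : v ⟨p.1, hp4⟩ = v ⟨q.1, hq4⟩ :=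
          root_lin (c := y 1) (t := v ⟨p.1, hp4⟩) (u := v ⟨q.1, hq4⟩) hy0
            (by linear_combination hp) (by linear_combination hq)
        have hmk := v.injective hvv
        have hval : (⟨p.1, hp4⟩ : Fin 4).val = (⟨q.1, hq4⟩ : Fin 4).val := congrArg Fin.val hmk
        exact Fin.ext hval
    have := wt_ge_of_Zset (GB v y) 1 hcard
    simpa using this
end evalcodes

section codeC
variable {F : Type*} [Field F] [CharP F 2] (v : Fin 4 ↪ F)

lemma v_inj_idx {n : ℕ} {p q : Fin n} {hp : (p:ℕ) < 4} {hq : (q:ℕ) < 4}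
    (h : v ⟨p.1, hp⟩ = v ⟨q.1, hq⟩) : p = q := by
  have hmk := v.injective h
  have hval : (⟨p.1, hp⟩ : Fin 4).val = (⟨q.1, hq⟩ : Fin 4).val := congrArg Fin.val hmk
  exact Fin.ext hval

def aC : Fin 6 → F := fun i =>
  if h : (i : ℕ) < 4 then v ⟨i.1, h⟩ * v ⟨i.1, h⟩ else if (i : ℕ) = 4 then 1 else 0
def bC : Fin 6 → F := fun i =>
  if h : (i : ℕ) < 4 then v ⟨i.1, h⟩ else if (i : ℕ) = 4 then 0 else 1
def cC : Fin 6 → F := fun i => if (i : ℕ) < 4 then 1 else 0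

def GC : (Fin 3 → F) →ₗ[F] (Fin 6 → F) where
  toFun y := fun i => aC v i * y 0 + bC v i * y 1 + cC i * y 2
  map_add' y z := by funext i; simp only [Pi.add_apply]; ring
  map_smul' c y := by funext i; simp only [Pi.smul_apply, smul_eq_mul, RingHom.id_apply]; ring

lemma GC_apply (y : Fin 3 → F) (i : Fin 6) :
    GC v y i = aC v i * y 0 + bC v i * y 1 + cC i * y 2 := rfl

lemma GC_eval (y : Fin 3 → F) (i : Fin 6) (h : (i : ℕ) < 4) :
    GC v y i = v ⟨i.1, h⟩ * v ⟨i.1, h⟩ * y 0 + v ⟨i.1, h⟩ * y 1 + y 2 := by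
  rw [GC_apply]
  simp [aC, bC, cC, h]

lemma GC_four (y : Fin 3 → F) : GC v y 4 = y 0 := by
  rw [GC_apply]
  have h1 : ¬((4 : Fin 6) : ℕ) < 4 := by decide
  have h2 : ((4 : Fin 6) : ℕ) = 4 := by decide
  simp [aC, bC, cC, h1, h2]

lemma GC_five (y : Fin 3 → F) : GC v y 5 = y 1 := by
  rw [GC_apply]
  have h1 : ¬((5 : Fin 6) : ℕ) < 4 := by decide
  have h2 : ¬((5 : Fin 6) : ℕ) = 4 := by decide
  simp [aC, bC, cC, h1, h2]

lemma GC_inj : Function.Injective (GC v) := by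
  have hz : ∀ y : Fin 3 → F, GC v y = 0 → y = 0 := by
    intro y h
    have h0 : y 0 = 0 := by have := congrFun h 4; rwa [GC_four] at this
    have h1 : y 1 = 0 := by have := congrFun h 5; rwa [GC_five] at this
    have h2 : y 2 = 0 := by
      have := congrFun h 0
      rw [GC_eval v y 0 (by norm_num), h0, h1] at this
      simpa using this
    funext j
    fin_cases j
    · exact h0
    · exact h1
    · exact h2
  intro y1 y2 h
  have := hz (y1 - y2) (by rw [map_sub, h, sub_self])
  rwa [sub_eq_zero] at this

lemma GC_rank : Module.finrank F (LinearMap.range (GC v)) = 3 := by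
  rw [LinearMap.finrank_range_of_inj (GC_inj v), Module.finrank_fin_fun]

lemma GC_minDist : isMinDist (LinearMap.range (GC v)) 4 := by
  constructor
  · set y : Fin 3 → F := ![0, 0, 1] with hy
    have hy0 : y 0 = 0 := rfl
    have hy1 : y 1 = 0 := rfl
    have hy2 : y 2 = 1 := rfl
    set x := GC v y with hx
    have hxi : ∀ i : Fin 6, x i = if (i : ℕ) < 4 then 1 else 0 := by
      intro i
      rcases fin6_cases i with h | rfl | rfl
      · rw [hx, GC_eval v y i h, hy0, hy1, hy2, if_pos h]; ring
      · rw [hx, GC_four, hy0]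
        have h4 : ¬((4 : Fin 6) : ℕ) < 4 := by decide
        simp [h4]
      · rw [hx, GC_five, hy1]
        have h5 : ¬((5 : Fin 6) : ℕ) < 4 := by decide
        simp [h5]
    refine ⟨x, LinearMap.mem_range_self _ _, ?_, ?_⟩
    · intro hc
      have := congrFun hc 0
      rw [hxi 0] at this
      norm_num at this
    · have hset : {i | x i ≠ 0} = ↑({0, 1, 2, 3} : Finset (Fin 6)) := by
        ext i
        simp only [Set.mem_setOf_eq, hxi i]
        constructor
        · intro hi
          have h4 : (i : ℕ) < 4 := by
            by_contra hc
            simp [hc] at hi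
          fin_cases i <;> simp_all <;> norm_num at h4
        · intro hi
          fin_cases i <;> simp_all
      rw [wt_eq_coe x _ hset]
      decide
  · rintro x ⟨y, rfl⟩ hxne
    have hy : ¬(y 0 = 0 ∧ y 1 = 0 ∧ y 2 = 0) := by
      rintro ⟨h0, h1, h2⟩
      apply hxne
      have : y = 0 := by
        funext j; fin_cases j
        · exact h0
        · exact h1
        · exact h2
      rw [this, map_zero]
    have hcard : (Zset (GC v y)).card ≤ 2 := by
      apply Zset_card_le_two
      intro p q r hp hq hr hpq hpr hqr
      by_cases hy0 : y 0 = 0 <;> by_cases hy1 : y 1 = 0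
      · -- y0 = 0, y1 = 0, so y2 ≠ 0; zeros only at 4,5
        have hy2 : y 2 ≠ 0 := fun h => hy ⟨hy0, hy1, h⟩
        have hcls : ∀ t : Fin 6, GC v y t = 0 → t = 4 ∨ t = 5 := by
          intro t ht
          rcases fin6_cases t with h | h | h
          · rw [GC_eval v y t h, hy0, hy1] at ht
            simp at ht
            exact absurd ht hy2
          · exact Or.inl h
          · exact Or.inr h
        rcases hcls p hp with rfl | rfl <;> rcases hcls q hq with rfl | rfl <;>
          rcases hcls r hr with rfl | rfl <;> simp_all
      · -- y0 = 0, y1 ≠ 0 : zeros at evals (at most 1) or coordinate 4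
        have hcls : ∀ t : Fin 6, GC v y t = 0 → (t : ℕ) < 4 ∨ t = 4 := by
          intro t ht
          rcases fin6_cases t with h | h | rfl
          · exact Or.inl h
          · exact Or.inr h
          · rw [GC_five] at ht; exact absurd ht hy1
        have key2 : ∀ s t : Fin 6, (s : ℕ) < 4 → (t : ℕ) < 4 →
            GC v y s = 0 → GC v y t = 0 → s ≠ t → False := by
          intro s t hs ht hzs hzt hst
          rw [GC_eval v y s hs, hy0] at hzs
          rw [GC_eval v y t ht, hy0] at hzt
          have hvv : v ⟨s.1, hs⟩ = v ⟨t.1, ht⟩ :=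
            root_lin (c := y 2) (t := v ⟨s.1, hs⟩) (u := v ⟨t.1, ht⟩) hy1
              (by linear_combination hzs) (by linear_combination hzt)
          exact hst (v_inj_idx v hvv)
        rcases hcls p hp with hp4 | rfl <;> rcases hcls q hq with hq4 | rfl <;>
          rcases hcls r hr with hr4 | rfl
        · exact key2 p q hp4 hq4 hp hq hpq
        · exact key2 p q hp4 hq4 hp hq hpq
        · exact key2 p r hp4 hr4 hp hr hpr
        · exact hqr rfl
        · exact key2 q r hq4 hr4 hq hr hqr
        · exact hpr rfl
        · exact hpq rfl
        · exact hpq rfl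
      · -- y0 ≠ 0, y1 = 0 : zeros at evals (at most 1) or coordinate 5
        have hcls : ∀ t : Fin 6, GC v y t = 0 → (t : ℕ) < 4 ∨ t = 5 := by
          intro t ht
          rcases fin6_cases t with h | rfl | h
          · exact Or.inl h
          · rw [GC_four] at ht; exact absurd ht hy0
          · exact Or.inr h
        have key2 : ∀ s t : Fin 6, (s : ℕ) < 4 → (t : ℕ) < 4 →
            GC v y s = 0 → GC v y t = 0 → s ≠ t → False := by
          intro s t hs ht hzs hzt hst
          rw [GC_eval v y s hs, hy1] at hzs
          rw [GC_eval v y t ht, hy1] at hzt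
          have hvv : v ⟨s.1, hs⟩ = v ⟨t.1, ht⟩ :=
            root_sq (c := y 2) (t := v ⟨s.1, hs⟩) (u := v ⟨t.1, ht⟩) hy0
              (by linear_combination hzs) (by linear_combination hzt)
          exact hst (v_inj_idx v hvv)
        rcases hcls p hp with hp4 | rfl <;> rcases hcls q hq with hq4 | rfl <;>
          rcases hcls r hr with hr4 | rfl
        · exact key2 p q hp4 hq4 hp hq hpq
        · exact key2 p q hp4 hq4 hp hq hpq
        · exact key2 p r hp4 hr4 hp hr hpr
        · exact hqr rfl
        · exact key2 q r hq4 hr4 hq hr hqr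
        · exact hpr rfl
        · exact hpq rfl
        · exact hpq rfl
      · -- y0 ≠ 0, y1 ≠ 0 : all zeros are evals, at most two
        have hcls : ∀ t : Fin 6, GC v y t = 0 → (t : ℕ) < 4 := by
          intro t ht
          rcases fin6_cases t with h | rfl | rfl
          · exact h
          · rw [GC_four] at ht; exact absurd ht hy0
          · rw [GC_five] at ht; exact absurd ht hy1
        have hp4 := hcls p hp
        have hq4 := hcls q hq
        have hr4 := hcls r hr
        rw [GC_eval v y p hp4] at hp
        rw [GC_eval v y q hq4] at hq
        rw [GC_eval v y r hr4] at hr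
        set tp := v ⟨p.1, hp4⟩
        set tq := v ⟨q.1, hq4⟩
        set tr := v ⟨r.1, hr4⟩
        have htpq : tp ≠ tq := fun h => hpq (v_inj_idx v h)
        have htpr : tp ≠ tr := fun h => hpr (v_inj_idx v h)
        have h1 : y 0 * (tp + tq) + y 1 = 0 :=
          two_roots (a := y 0) (b := y 1) (c := y 2) htpq (by linear_combination hp) (by linear_combination hq)
        have h2 : y 0 * (tp + tr) + y 1 = 0 :=
          two_roots (a := y 0) (b := y 1) (c := y 2) htpr (by linear_combination hp) (by linear_combination hr)
        have : tq = tr := by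
          have h3 : y 0 * tq = y 0 * tr := by linear_combination h1 - h2
          exact mul_left_cancel₀ hy0 h3
        exact hqr (v_inj_idx v this)
    have := wt_ge_of_Zset (GC v y) 2 hcard
    simpa using this
end codeC

lemma wt_ge_coe {F : Type*} [Zero F] {n : ℕ} (x : Fin n → F) (s : Finset (Fin n))
    (h : ↑s ⊆ {i | x i ≠ 0}) : s.card ≤ wt x := by
  rw [wt, ← Set.ncard_coe_finset]
  exact Set.ncard_le_ncard h (Set.toFinite _)

section parity
variable {F : Type*} [Field F]

def parMap (s : ℕ) : (Fin s → F) →ₗ[F] (Fin (s + 1) → F) where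
  toFun y := Fin.snoc y (-∑ j, y j)
  map_add' y z := by
    funext i
    cases i using Fin.lastCases with
    | last => simp [Finset.sum_add_distrib]; ring
    | cast j => simp
  map_smul' c y := by
    funext i
    cases i using Fin.lastCases with
    | last => simp [Finset.mul_sum]
    | cast j => simp

lemma parMap_cast {s : ℕ} (y : Fin s → F) (j : Fin s) :
    parMap s y (Fin.castSucc j) = y j := by simp [parMap]

lemma parMap_last {s : ℕ} (y : Fin s → F) :
    parMap s y (Fin.last s) = -∑ j, y j := by simp [parMap]

lemma parMap_inj {s : ℕ} : Function.Injective (parMap (F := F) s) := by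
  intro y1 y2 h
  funext j
  have := congrFun h (Fin.castSucc j)
  rwa [parMap_cast, parMap_cast] at this

lemma parMap_sum {s : ℕ} (y : Fin s → F) : ∑ i, parMap s y i = 0 := by
  rw [Fin.sum_univ_castSucc]
  simp only [parMap_cast, parMap_last]
  ring

lemma par_rank {s : ℕ} : Module.finrank F (LinearMap.range (parMap (F := F) s)) = s := by
  rw [LinearMap.finrank_range_of_inj parMap_inj, Module.finrank_fin_fun]

lemma par_minDist {s : ℕ} (hs : 1 ≤ s) :
    isMinDist (LinearMap.range (parMap (F := F) s)) 2 := by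
  have h0s : (0 : ℕ) < s := hs
  constructor
  · -- witness
    set i0 : Fin s := ⟨0, h0s⟩
    set x := parMap s (Pi.single i0 (1 : F)) with hx
    have hxlast : x (Fin.last s) = -1 := by
      rw [hx, parMap_last]; simp
    have hxcast : ∀ j : Fin s, x (Fin.castSucc j) = if j = i0 then 1 else 0 := by
      intro j
      rw [hx, parMap_cast, Pi.single_apply]
    refine ⟨x, LinearMap.mem_range_self _ _, ?_, ?_⟩
    · intro hc
      have := congrFun hc (Fin.last s)
      rw [hxlast] at this
      simp at this
    · have hset : {i | x i ≠ 0} = ↑({Fin.castSucc i0, Fin.last s} : Finset (Fin (s+1))) := by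
        ext i
        simp only [Set.mem_setOf_eq, Finset.coe_insert, Finset.coe_singleton,
          Set.mem_insert_iff, Set.mem_singleton_iff]
        cases i using Fin.lastCases with
        | last => simp [hxlast]
        | cast j =>
          rw [hxcast]
          by_cases hji : j = i0
          · simp [hji]
          · have h1 : ¬ Fin.castSucc j = Fin.castSucc i0 :=
              fun h => hji (Fin.castSucc_injective _ h)
            have h2 : Fin.castSucc j ≠ Fin.last s := Fin.ne_last_of_lt (Fin.castSucc_lt_last j)
            simp [hji, h1, h2]
      rw [wt_eq_coe x _ hset, Finset.card_insert_of_notMem, Finset.card_singleton]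
      simp only [Finset.mem_singleton]
      exact Fin.ne_last_of_lt (Fin.castSucc_lt_last i0)
  · rintro x ⟨y, rfl⟩ hxne
    set x := parMap s y
    have hsum : ∑ i, x i = 0 := parMap_sum y
    have hex : ∃ i, x i ≠ 0 := Function.ne_iff.1 hxne
    obtain ⟨i, hi⟩ := hex
    have hex2 : ∃ j, x j ≠ 0 ∧ j ≠ i := by
      by_contra hc
      push_neg at hc
      have : ∑ k, x k = x i := by
        apply Finset.sum_eq_single i
        · intro b _ hb
          by_contra hb2
          exact hb (hc b hb2)
        · intro h; exact absurd (Finset.mem_univ i) h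
      rw [hsum] at this
      exact hi this.symm
    obtain ⟨j, hj, hji⟩ := hex2
    have : ({j, i} : Finset (Fin (s+1))).card ≤ wt x := by
      apply wt_ge_coe
      intro a ha
      simp only [Finset.coe_insert, Finset.coe_singleton, Set.mem_insert_iff,
        Set.mem_singleton_iff] at ha
      rcases ha with rfl | rfl
      · exact hj
      · exact hi
    rwa [Finset.card_pair hji] at this
end parity

/-- for every s ≥ 2 there exists an optimal quaternary
(2s+2, s, 1) LRC with minimum distance 4, and for k ∈ {2,3} there exists an
optimal quaternary (2k+6, k, 1) LRC with minimum distance 8. -/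
theorem stmt_18 :
    (∀ s : ℕ, 2 ≤ s →
      ∃ C : Submodule GF4 (Fin (2 * s + 2) → GF4),
        Module.finrank GF4 C = s ∧ isMinDist C 4 ∧ hasLocality C 1)
    ∧
    (∀ k : ℕ, k = 2 ∨ k = 3 →
      ∃ C : Submodule GF4 (Fin (2 * k + 6) → GF4),
        Module.finrank GF4 C = k ∧ isMinDist C 8 ∧ hasLocality C 1) := by

  haveI : Fintype GF4 := Fintype.ofFinite GF4
  have hcar : Fintype.card GF4 = 4 := by
    rw [← Nat.card_eq_fintype_card, GaloisField.card 2 2 (by norm_num)]; norm_num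
  have e : GF4 ≃ Fin 4 := Fintype.equivFinOfCardEq hcar
  have v : Fin 4 ↪ GF4 := e.symm.toEmbedding
  constructor
  · intro s hs
    obtain ⟨C, h1, h2, h3⟩ := dup_exists GF4 (LinearMap.range (parMap (F := GF4) s))
      par_rank (par_minDist (by omega))
    exact ⟨C, h1, h2, h3⟩
  · intro k hk
    rcases hk with rfl | rfl
    · obtain ⟨C, h1, h2, h3⟩ := dup_exists GF4 (LinearMap.range (GB v))
        (GB_rank v) (GB_minDist v)
      exact ⟨C, h1, h2, h3⟩
    · obtain ⟨C, h1, h2, h3⟩ := dup_exists GF4 (LinearMap.range (GC v))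
        (GC_rank v) (GC_minDist v)
      exact ⟨C, h1, h2, h3⟩
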